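/- arXiv:1209.4592 — 4 statements merged into one kernel-verified Lean document; each statement's English description precedes it below -/
import Mathlib

section
/- Let ξ₁, ξ₂, … be i.i.d. draws from a discrete distribution on S = {1,…,m} with density p, and for 1 ≤ k ≤ m let X_m(k) be the minimum number of draws needed to observe k distinct values. Then E[X_m(k)] = 1 + Σ_{i₁} p_{i₁}/p(i₁) + Σ_{i₁≠i₂} p_{i₁}p_{i₂}/(p(i₁)p(i₁,i₂)) + ⋯ + Σ_{i₁,…,i_{k−1} pairwise distinct} p_{i₁}⋯p_{i_{k−1}}/(p(i₁)p(i₁,i₂)⋯p(i₁,…,i_{k−1})), where all indices range over {1,…,m} and p(i₁,…,i_s) = 1 − p_{i₁} − ⋯ − p_{i_s}. -/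
open MeasureTheory ProbabilityTheory Finset
open scoped ENNReal

/-- Number of distinct values observed among the first `n` draws `ξ 0, …, ξ (n-1)`. -/
noncomputable def numDistinct {m : ℕ} {Ω : Type*} (ξ : ℕ → Ω → Fin m) (n : ℕ) (ω : Ω) : ℕ :=
  (Finset.image (fun t : Fin n => ξ t ω) Finset.univ).card

/-- `drawsNeeded ξ k ω` is the minimum number of draws needed to observe `k` distinct
values (`⊤` if fewer than `k` distinct values ever appear). -/
noncomputable def drawsNeeded {m : ℕ} {Ω : Type*} (ξ : ℕ → Ω → Fin m) (k : ℕ) (ω : Ω) : ℕ∞ :=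
  sInf ((fun n : ℕ => (n : ℕ∞)) '' {n | k ≤ numDistinct ξ n ω})

/-- `gap ξ k ω` is the number of additional draws needed to pass from the `(k-1)`-th to
the `k`-th distinct observed value. -/
noncomputable def gap {m : ℕ} {Ω : Type*} (ξ : ℕ → Ω → Fin m) (k : ℕ) (ω : Ω) : ℕ∞ :=
  drawsNeeded ξ k ω - drawsNeeded ξ (k - 1) ω

/-- `firstHit ξ i ω` is the index (counting draws from 1) of the first draw equal to `i`. -/
noncomputable def firstHit {m : ℕ} {Ω : Type*} (ξ : ℕ → Ω → Fin m) (i : Fin m) (ω : Ω) : ℕ∞ :=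
  sInf ((fun t : ℕ => (t : ℕ∞) + 1) '' {t | ξ t ω = i})

/-- `recordType ξ j ω` is the type of the `j`-th distinct value observed, in order of
first appearance (junk value if fewer than `j` distinct values ever appear). -/
noncomputable def recordType {m : ℕ} {Ω : Type*} (ξ : ℕ → Ω → Fin m) (j : ℕ) (ω : Ω) : Fin m :=
  ξ (sInf {n : ℕ | j ≤ numDistinct ξ (n + 1) ω}) ω

/-- The generic term `p_{i₁}⋯p_{i_s} / (p(i₁) p(i₁,i₂) ⋯ p(i₁,…,i_s))` of the nested sums,
where the pairwise distinct indices `(i₁,…,i_s)` are encoded by the embedding `f`. -/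
noncomputable def nestedTerm {m : ℕ} (p : Fin m → ℝ) (s : ℕ) (f : Fin s ↪ Fin m) : ℝ :=
  (∏ t, p (f t)) / ∏ t : Fin s, (1 - ∑ r ∈ Finset.univ.filter (· ≤ t), p (f r))

/-- The sum of `nestedTerm p s` over all tuples of pairwise distinct indices. -/
noncomputable def nestedSum {m : ℕ} (p : Fin m → ℝ) (s : ℕ) : ℝ :=
  ∑ f : Fin s ↪ Fin m, nestedTerm p s f

/-!
Tail sums: `E[X_m(k)] = ∑ₙ P(fewer than k distinct values among the first n draws)`, and by
independence this is the total weight `∏ⱼ p_{lⱼ}` of all finite words `l` over `S` with fewer than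
`k` distinct letters. Sort the words by their records, the distinct letters in order of first
appearance. A word whose records are `(i₁, …, i_s, a)` factors uniquely as `w a u`, where `w` has
records `(i₁, …, i_s)` and `u` is any word over `{i₁, …, i_s, a}`; the words over a set `T` have
total weight `(1 - ∑_{i ∈ T} p_i)⁻¹` (a geometric series). By induction, the words with records
`(i₁, …, i_s)` weigh `p_{i₁} ⋯ p_{i_s} / (p(i₁) ⋯ p(i₁, …, i_s))`, and summing over `s < k` gives
the formula.
-/

namespace CouponCollector

section Records

variable {α : Type*} [DecidableEq α]

lemma toFinset_ofFn {n : ℕ} (v : Fin n → α) : (List.ofFn v).toFinset = univ.image v := by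
  ext x
  simp [List.mem_ofFn]

lemma append_cons_inj_of_notMem_left {w w' u u' : List α} {a : α} (ha : a ∉ w) (ha' : a ∉ w')
    (h : w ++ a :: u = w' ++ a :: u') : w = w' ∧ u = u' := by
  have hlen : w.length = w'.length := by
    simpa [List.idxOf_append_of_notMem, ha, ha'] using congrArg (List.idxOf a) h
  obtain ⟨hw, hu⟩ := List.append_inj h hlen
  exact ⟨hw, List.cons_injective hu⟩

def records : List α → List α
  | [] => []
  | a :: l => a :: (records l).filter (· ≠ a)

@[simp] lemma records_nil : records ([] : List α) = [] := rfl

lemma records_cons (a : α) (l : List α) :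
    records (a :: l) = a :: (records l).filter (· ≠ a) := rfl

@[simp] lemma mem_records {l : List α} {x : α} : x ∈ records l ↔ x ∈ l := by
  induction l with
  | nil => rfl
  | cons a l ih => by_cases hx : x = a <;> simp [records_cons, hx, ih]

lemma nodup_records (l : List α) : (records l).Nodup := by
  induction l with
  | nil => exact List.nodup_nil
  | cons a l ih => exact (ih.filter _).cons (by simp)

@[simp] lemma records_eq_nil {l : List α} : records l = [] ↔ l = [] := by
  cases l <;> simp [records_cons]

lemma length_records (l : List α) : (records l).length = #l.toFinset := by
  rw [← List.toFinset_card_of_nodup (nodup_records l)]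
  congr 1
  ext x
  simp

lemma records_append (w u : List α) :
    records (w ++ u) = records w ++ (records u).filter (· ∉ w) := by
  induction w with
  | nil => simp
  | cons a w ih =>
    simp only [List.cons_append, records_cons, ih, List.filter_append, List.filter_filter]
    congr 2
    refine List.filter_congr fun x _ => ?_
    by_cases h : x = a <;> simp [h]

lemma records_append_cons {w : List α} {a : α} (ha : a ∉ w) (u : List α) :
    records (w ++ a :: u)
      = records w ++ a :: ((records u).filter (· ≠ a)).filter (· ∉ w) := by
  simp [records_append, records_cons, ha]

lemma records_eq_concat_iff {l R : List α} {a : α} (ha : a ∉ R) :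
    records l = R ++ [a] ↔
      ∃ w u, l = w ++ a :: u ∧ records w = R ∧ ∀ x ∈ u, x ∈ a :: R := by
  constructor
  · intro h
    obtain ⟨w, u, haw, rfl, -⟩ := List.exists_erase_eq (mem_records.1 (by simp [h]) : a ∈ l)
    rw [records_append_cons haw] at h
    obtain ⟨hw, -, hu⟩ := (List.append_cons_inj_of_notMem (by simpa using haw) (by simp)).1 h
    refine ⟨w, u, rfl, hw, fun x hx => ?_⟩
    by_contra hx'
    simp only [List.mem_cons, not_or, ← hw, mem_records] at hx'
    have := List.filter_eq_nil_iff.1 hu x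
      (List.mem_filter.2 ⟨mem_records.2 hx, by simpa using hx'.1⟩)
    simp [hx'.2] at this
  · rintro ⟨w, u, rfl, rfl, hu⟩
    rw [records_append_cons (by simpa using ha)]
    simp only [List.append_cancel_left_eq, List.cons.injEq, true_and, List.filter_eq_nil_iff]
    intro x hx
    have := hu x (by simpa using (List.mem_filter.1 hx).1)
    simp_all

end Records

section Weights

variable {α : Type*} (q : α → ℝ≥0∞)

lemma tsum_subtype_eq_tsum_ite {β : Type*} (P : β → Prop) [DecidablePred P] (F : β → ℝ≥0∞) :
    ∑' b : {b // P b}, F b = ∑' b, if P b then F b else 0 :=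
  (_root_.tsum_subtype {b | P b} F).trans (tsum_congr fun b => by simp [Set.indicator_apply])

noncomputable def weight (l : List α) : ℝ≥0∞ := (l.map q).prod

@[simp] lemma weight_nil : weight q [] = 1 := rfl

@[simp] lemma weight_cons (a : α) (l : List α) : weight q (a :: l) = q a * weight q l := by
  simp [weight]

@[simp] lemma weight_append (l l' : List α) : weight q (l ++ l') = weight q l * weight q l' := by
  simp [weight]

lemma weight_ofFn {n : ℕ} (v : Fin n → α) : weight q (List.ofFn v) = ∏ t, q (v t) := by
  simp [weight, List.map_ofFn, List.prod_ofFn]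

lemma weight_indicator (T : Set α) (l : List α) :
    weight (T.indicator q) l = {l | ∀ x ∈ l, x ∈ T}.indicator (weight q) l := by
  induction l with
  | nil => simp
  | cons a l ih =>
    simp only [weight_cons, ih, Set.indicator]
    split_ifs <;> aesop

lemma tsum_list_eq_tsum_tuple [Fintype α] (F : List α → ℝ≥0∞) :
    ∑' l, F l = ∑' n, ∑ v : Fin n → α, F (List.ofFn v) := by
  rw [← List.equivSigmaTuple.symm.tsum_eq, ENNReal.tsum_sigma']
  exact tsum_congr fun n => tsum_fintype _

lemma tsum_weight [Fintype α] : ∑' l, weight q l = (1 - ∑ x, q x)⁻¹ := by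
  simp only [tsum_list_eq_tsum_tuple, weight_ofFn, ← Fintype.prod_sum, prod_const, card_univ,
    Fintype.card_fin, ENNReal.tsum_geometric]

lemma tsum_weight_of_forall_mem [Fintype α] (T : Finset α) :
    ∑' u : {u : List α // ∀ x ∈ u, x ∈ T}, weight q u = (1 - ∑ x ∈ T, q x)⁻¹ := by
  rw [← sum_indicator_subset q (subset_univ T), ← tsum_weight]
  exact (tsum_subtype {u : List α | ∀ x ∈ u, x ∈ T} _).trans
    (tsum_congr fun l => (weight_indicator q _ l).symm)

noncomputable def recordWeight {s : ℕ} (f : Fin s ↪ α) : ℝ≥0∞ :=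
  (∏ t, q (f t)) * ∏ t, (1 - ∑ r ∈ Iic t, q (f r))⁻¹

lemma recordWeight_succ {s : ℕ} (f : Fin (s + 1) ↪ α) :
    recordWeight q f = recordWeight q (Fin.castSuccEmb.trans f)
      * (q (f (Fin.last s)) * (1 - ∑ r, q (f r))⁻¹) := by
  have hIic (t : Fin s) : ∑ r ∈ Iic t.castSucc, q (f r)
      = ∑ r ∈ Iic t, q (Fin.castSuccEmb.trans f r) := by
    rw [← Fin.map_castSuccEmb_Iic, sum_map]
    rfl
  have hlast : Iic (Fin.last s) = univ := eq_univ_of_forall fun r => mem_Iic.2 (Fin.le_last r)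
  simp only [recordWeight, Fin.prod_univ_castSucc, hIic, hlast, Function.Embedding.trans_apply,
    Fin.coe_castSuccEmb]
  ring

end Weights

section RecordWeights

variable {α : Type*} [DecidableEq α] (q : α → ℝ≥0∞)

lemma tsum_weight_records_concat {R : List α} {a : α} (ha : a ∉ R) :
    ∑' l : {l : List α // records l = R ++ [a]}, weight q l
      = (∑' w : {w : List α // records w = R}, weight q w)
          * (q a * ∑' u : {u : List α // ∀ x ∈ u, x ∈ a :: R}, weight q u) := by
  have haw (w : {w : List α // records w = R}) : a ∉ w.1 := by simpa [← w.2] using ha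
  let g : {w : List α // records w = R} × {u : List α // ∀ x ∈ u, x ∈ a :: R}
      → {l : List α // records l = R ++ [a]} := fun z =>
    ⟨z.1.1 ++ a :: z.2.1, (records_eq_concat_iff ha).2 ⟨_, _, rfl, z.1.2, z.2.2⟩⟩
  have hg : Function.Bijective g := by
    refine ⟨fun z z' h => ?_, fun l => ?_⟩
    · obtain ⟨hw, hu⟩ := append_cons_inj_of_notMem_left (haw z.1) (haw z'.1)
        (congrArg Subtype.val h)
      exact Prod.ext (Subtype.ext hw) (Subtype.ext hu)
    · obtain ⟨w, u, hl, hw, hu⟩ := (records_eq_concat_iff ha).1 l.2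
      exact ⟨(⟨w, hw⟩, ⟨u, hu⟩), Subtype.ext hl.symm⟩
  rw [← (Equiv.ofBijective g hg).tsum_eq, ENNReal.tsum_prod', ← ENNReal.tsum_mul_right]
  refine tsum_congr fun w => ?_
  simp [g, ← ENNReal.tsum_mul_left]

theorem tsum_weight_records_eq_recordWeight [Fintype α] {s : ℕ} (f : Fin s ↪ α) :
    ∑' l : {l : List α // records l = List.ofFn f}, weight q l = recordWeight q f := by
  induction s with
  | zero =>
    have hnil : records [] = List.ofFn f := by simp
    rw [tsum_eq_single (⟨[], hnil⟩ : {l : List α // records l = List.ofFn f}) fun l hl =>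
      (hl (Subtype.ext (records_eq_nil.1 (l.2.trans hnil.symm)))).elim]
    simp [recordWeight]
  | succ s ih =>
    set f' : Fin s ↪ α := Fin.castSuccEmb.trans f
    have hf : List.ofFn f = List.ofFn f' ++ [f (Fin.last s)] := by
      rw [List.ofFn_succ', List.concat_eq_append]
      rfl
    have hlast : f (Fin.last s) ∉ List.ofFn f' := by
      simp [f', List.mem_ofFn, (Fin.castSucc_lt_last _).ne]
    have hmem (x : α) : x ∈ f (Fin.last s) :: List.ofFn f' ↔ x ∈ univ.map f := by
      rw [List.mem_cons, or_comm, ← List.mem_singleton, ← List.mem_append, ← hf, List.mem_ofFn]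
      simp
    have hfree : ∑' u : {u : List α // ∀ x ∈ u, x ∈ f (Fin.last s) :: List.ofFn f'}, weight q u
        = (1 - ∑ r, q (f r))⁻¹ := by
      rw [← sum_map univ f q, ← tsum_weight_of_forall_mem]
      exact (Equiv.subtypeEquivRight fun u => forall₂_congr fun x _ => hmem x).tsum_eq
        (fun u => weight q u.1)
    rw [hf, tsum_weight_records_concat q hlast, ih, hfree, recordWeight_succ]

lemma sum_embedding_ite_records_eq [Fintype α] (l : List α) (c : ℝ≥0∞) (s : ℕ) :
    ∑ f : Fin s ↪ α, (if records l = List.ofFn f then c else 0)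
      = if #l.toFinset = s then c else 0 := by
  rw [← length_records]
  split_ifs with hs
  · subst hs
    let f₀ : Fin (records l).length ↪ α := ⟨(records l).get, (nodup_records l).injective_get⟩
    have hf₀ (f : Fin (records l).length ↪ α) : records l = List.ofFn f ↔ f₀ = f :=
      calc records l = List.ofFn f ↔ List.ofFn f₀ = List.ofFn f := by
            rw [show List.ofFn f₀ = records l from List.ofFn_get _]
        _ ↔ f₀ = f := List.ofFn_inj.trans DFunLike.coe_fn_eq
    simp_rw [hf₀, sum_ite_eq, mem_univ, if_true]
  · refine sum_eq_zero fun f _ => if_neg fun h => hs ?_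
    rw [h, List.length_ofFn]

theorem tsum_weight_card_toFinset_lt [Fintype α] (k : ℕ) :
    ∑' l : List α, (if #l.toFinset < k then weight q l else 0)
      = ∑ s ∈ range k, ∑ f : Fin s ↪ α, recordWeight q f := by
  have hsplit (l : List α) : (if #l.toFinset < k then weight q l else 0)
      = ∑ s ∈ range k, ∑ f : Fin s ↪ α, (if records l = List.ofFn f then weight q l else 0) := by
    simp only [sum_embedding_ite_records_eq, sum_ite_eq, mem_range]
  simp_rw [hsplit]
  rw [Summable.tsum_finsetSum fun _ _ => ENNReal.summable]
  refine sum_congr rfl fun s _ => ?_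
  rw [Summable.tsum_finsetSum fun _ _ => ENNReal.summable]
  refine sum_congr rfl fun f _ => ?_
  rw [← tsum_weight_records_eq_recordWeight, tsum_subtype_eq_tsum_ite]

end RecordWeights

section Draws

variable {m : ℕ} {Ω : Type*}

lemma numDistinct_mono (ξ : ℕ → Ω → Fin m) (ω : Ω) : Monotone fun n => numDistinct ξ n ω := by
  intro j n hjn
  refine card_le_card fun x hx => ?_
  obtain ⟨t, -, rfl⟩ := mem_image.1 hx
  exact mem_image.2 ⟨Fin.castLE hjn t, mem_univ _, rfl⟩

lemma natCast_lt_drawsNeeded_iff (ξ : ℕ → Ω → Fin m) (k n : ℕ) (ω : Ω) :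
    (n : ℕ∞) < drawsNeeded ξ k ω ↔ numDistinct ξ n ω < k := by
  constructor
  · intro h
    by_contra hk
    exact h.not_ge (sInf_le ⟨n, not_lt.1 hk, rfl⟩)
  · intro h
    refine (ENat.natCast_lt_natCast.2 n.lt_succ_self).trans_le (le_sInf ?_)
    rintro _ ⟨j, hj, rfl⟩
    have hnj : n < j := not_le.1 fun hjn => (h.trans_le hj).not_ge (numDistinct_mono ξ ω hjn)
    exact ENat.natCast_le_natCast.2 hnj

lemma tsum_ite_natCast_lt (a : ℕ∞) : ∑' n : ℕ, (if (n : ℕ∞) < a then 1 else 0 : ℝ≥0∞) = a := by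
  induction a using ENat.recTopCoe with
  | top => simp
  | coe N =>
    rw [tsum_eq_sum (s := range N) fun n hn => if_neg (by simpa using hn),
      sum_congr rfl fun n hn => if_pos (by simpa using hn)]
    simp

variable [MeasurableSpace Ω] (μ : Measure Ω) {ξ : ℕ → Ω → Fin m}

lemma measurableSet_numDistinct_lt (hmeas : ∀ n, Measurable (ξ n)) (n k : ℕ) :
    MeasurableSet {ω | numDistinct ξ n ω < k} := by
  have hF : Measurable fun ω (t : Fin n) => ξ t ω := measurable_pi_lambda _ fun t => hmeas t
  exact hF (Set.toFinite {v : Fin n → Fin m | #(univ.image v) < k}).measurableSet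

lemma lintegral_drawsNeeded (hmeas : ∀ n, Measurable (ξ n)) (k : ℕ) :
    ∫⁻ ω, (drawsNeeded ξ k ω : ℝ≥0∞) ∂μ = ∑' n, μ {ω | numDistinct ξ n ω < k} := by
  have htail (ω : Ω) : (drawsNeeded ξ k ω : ℝ≥0∞)
      = ∑' n, {ω | numDistinct ξ n ω < k}.indicator 1 ω := by
    rw [← tsum_ite_natCast_lt]
    simp [Set.indicator_apply, natCast_lt_drawsNeeded_iff]
  simp_rw [htail]
  rw [lintegral_tsum fun n => (measurable_one.indicator
    (measurableSet_numDistinct_lt hmeas n k)).aemeasurable]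
  exact tsum_congr fun n => lintegral_indicator_one (measurableSet_numDistinct_lt hmeas n k)

lemma measure_forall_eq_eq_prod {β : Type*} [MeasurableSpace β] [MeasurableSingletonClass β]
    {X : ℕ → Ω → β} (hindep : iIndepFun X μ) {n : ℕ} (v : Fin n → β) :
    μ {ω | ∀ t : Fin n, X t ω = v t} = ∏ t : Fin n, μ {ω | X t ω = v t} := by
  have hprod := (hindep.precomp (g := ((↑) : Fin n → ℕ)) Fin.val_injective)
    |>.measure_inter_preimage_eq_mul univ (sets := fun t => {v t})
      fun _ _ => measurableSet_singleton _
  rw [show {ω | ∀ t : Fin n, X t ω = v t} = ⋂ t ∈ (univ : Finset (Fin n)), X t ⁻¹' {v t} by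
    ext; simp]
  exact hprod

variable (p : Fin m → ℝ)

lemma measure_numDistinct_lt (hmeas : ∀ n, Measurable (ξ n)) (hindep : iIndepFun ξ μ)
    (hdist : ∀ n i, μ {ω | ξ n ω = i} = ENNReal.ofReal (p i)) (n k : ℕ) :
    μ {ω | numDistinct ξ n ω < k}
      = ∑ v : Fin n → Fin m, if #(univ.image v) < k then ∏ t, ENNReal.ofReal (p (v t)) else 0 := by
  set F : Ω → Fin n → Fin m := fun ω t => ξ t ω
  have hF : Measurable F := measurable_pi_lambda _ fun t => hmeas t
  have hfiber (v : Fin n → Fin m) : F ⁻¹' {v} = {ω | ∀ t : Fin n, ξ t ω = v t} := by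
    ext ω
    simp [F, funext_iff]
  have hset : {ω | numDistinct ξ n ω < k}
      = F ⁻¹' ↑(univ.filter fun v : Fin n → Fin m => #(univ.image v) < k) := by
    ext ω
    simp [F, numDistinct]
  rw [hset, ← sum_measure_preimage_singleton _ fun v _ => hF (measurableSet_singleton v),
    sum_filter]
  simp only [hfiber, measure_forall_eq_eq_prod μ hindep, hdist]

lemma tsum_measure_numDistinct_lt (hmeas : ∀ n, Measurable (ξ n)) (hindep : iIndepFun ξ μ)
    (hdist : ∀ n i, μ {ω | ξ n ω = i} = ENNReal.ofReal (p i)) (k : ℕ) :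
    ∑' n, μ {ω | numDistinct ξ n ω < k}
      = ∑' l : List (Fin m), if #l.toFinset < k then weight (fun i => ENNReal.ofReal (p i)) l
          else 0 := by
  rw [tsum_list_eq_tsum_tuple]
  refine tsum_congr fun n => ?_
  simp only [measure_numDistinct_lt μ p hmeas hindep hdist, toFinset_ofFn, weight_ofFn]

end Draws

section Real

variable {m : ℕ} {p : Fin m → ℝ}

lemma sum_Iic_lt_one (hp0 : ∀ i, 0 < p i) (hp1 : ∑ i, p i = 1) {s : ℕ} (hs : s < m)
    (f : Fin s ↪ Fin m) (t : Fin s) : ∑ r ∈ Iic t, p (f r) < 1 := by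
  obtain ⟨i, -, hi⟩ := exists_mem_notMem_of_card_lt_card (s := univ.map f) (t := univ)
    (by simpa using hs)
  calc ∑ r ∈ Iic t, p (f r) ≤ ∑ r, p (f r) :=
        sum_le_sum_of_subset_of_nonneg (subset_univ _) fun _ _ _ => (hp0 _).le
    _ = ∑ j ∈ univ.map f, p j := (sum_map _ _ _).symm
    _ < ∑ j, p j := sum_lt_sum_of_subset (subset_univ _) (mem_univ i) hi (hp0 i)
        fun _ _ _ => (hp0 _).le
    _ = 1 := hp1

lemma nestedTerm_eq (s : ℕ) (f : Fin s ↪ Fin m) :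
    nestedTerm p s f = (∏ t, p (f t)) * ∏ t, (1 - ∑ r ∈ Iic t, p (f r))⁻¹ := by
  simp only [nestedTerm, filter_ge_eq_Iic, div_eq_mul_inv, prod_inv_distrib]

lemma nestedTerm_nonneg (hp0 : ∀ i, 0 < p i) (hp1 : ∑ i, p i = 1) {s : ℕ} (hs : s < m)
    (f : Fin s ↪ Fin m) : 0 ≤ nestedTerm p s f := by
  rw [nestedTerm_eq]
  exact mul_nonneg (prod_nonneg fun t _ => (hp0 _).le)
    (prod_nonneg fun t _ => inv_nonneg.2 (sub_pos.2 (sum_Iic_lt_one hp0 hp1 hs f t)).le)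

-- For `s = m` the last denominator vanishes, and `0⁻¹` is `⊤` in `ℝ≥0∞` but `0` in `ℝ`.
lemma recordWeight_ofReal (hp0 : ∀ i, 0 < p i) (hp1 : ∑ i, p i = 1) {s : ℕ} (hs : s < m)
    (f : Fin s ↪ Fin m) :
    recordWeight (fun i => ENNReal.ofReal (p i)) f = ENNReal.ofReal (nestedTerm p s f) := by
  have hdenom (t : Fin s) : (1 - ∑ r ∈ Iic t, ENNReal.ofReal (p (f r)))⁻¹
      = ENNReal.ofReal (1 - ∑ r ∈ Iic t, p (f r))⁻¹ := by
    rw [← ENNReal.ofReal_sum_of_nonneg fun r _ => (hp0 _).le, ← ENNReal.ofReal_one,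
      ← ENNReal.ofReal_sub _ (sum_nonneg fun r _ => (hp0 _).le),
      ← ENNReal.ofReal_inv_of_pos (sub_pos.2 (sum_Iic_lt_one hp0 hp1 hs f t))]
  rw [recordWeight, nestedTerm_eq, prod_congr rfl fun t _ => hdenom t,
    ← ENNReal.ofReal_prod_of_nonneg fun t _ => (hp0 _).le,
    ← ENNReal.ofReal_prod_of_nonneg fun t _ =>
      inv_nonneg.2 (sub_pos.2 (sum_Iic_lt_one hp0 hp1 hs f t)).le,
    ENNReal.ofReal_mul (prod_nonneg fun t _ => (hp0 _).le)]

lemma sum_range_recordWeight_ofReal (hp0 : ∀ i, 0 < p i) (hp1 : ∑ i, p i = 1) {k : ℕ}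
    (hkm : k ≤ m) :
    ∑ s ∈ range k, ∑ f : Fin s ↪ Fin m, recordWeight (fun i => ENNReal.ofReal (p i)) f
      = ENNReal.ofReal (∑ s ∈ range k, nestedSum p s) := by
  have hs {s : ℕ} (h : s ∈ range k) : s < m := (mem_range.1 h).trans_le hkm
  have hsum : ∀ s ∈ range k, 0 ≤ nestedSum p s := fun s hsk =>
    sum_nonneg fun f _ => nestedTerm_nonneg hp0 hp1 (hs hsk) f
  rw [ENNReal.ofReal_sum_of_nonneg hsum]
  refine sum_congr rfl fun s hsk => ?_
  rw [nestedSum, ENNReal.ofReal_sum_of_nonneg fun f _ => nestedTerm_nonneg hp0 hp1 (hs hsk) f]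
  exact sum_congr rfl fun f _ => recordWeight_ofReal hp0 hp1 (hs hsk) f

end Real

end CouponCollector

open CouponCollector

theorem expected_draws_for_k_records_general
    {Ω : Type*} [MeasurableSpace Ω] (μ : Measure Ω)
    {m : ℕ} (p : Fin m → ℝ) (hp0 : ∀ i, 0 < p i) (hp1 : ∑ i, p i = 1)
    (ξ : ℕ → Ω → Fin m) (hmeas : ∀ n, Measurable (ξ n))
    (hindep : iIndepFun ξ μ)
    (hdist : ∀ n i, μ {ω | ξ n ω = i} = ENNReal.ofReal (p i))
    (k : ℕ) (hkm : k ≤ m) :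
    ∫⁻ ω, (drawsNeeded ξ k ω : ℝ≥0∞) ∂μ
      = ENNReal.ofReal (∑ s ∈ Finset.range k, nestedSum p s) := by
  rw [lintegral_drawsNeeded μ hmeas, tsum_measure_numDistinct_lt μ p hmeas hindep hdist,
    tsum_weight_card_toFinset_lt, sum_range_recordWeight_ofReal hp0 hp1 hkm]

/-- For 1 ≤ k ≤ m, the expected minimum number of draws needed to observe
k distinct values is 1 + Σ_{i₁} p_{i₁}/p(i₁) + ⋯ +
Σ_{i₁,…,i_{k−1} distinct} p_{i₁}⋯p_{i_{k−1}}/(p(i₁)⋯p(i₁,…,i_{k−1})). -/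
theorem expected_draws_for_k_records
    {Ω : Type*} [MeasurableSpace Ω] (μ : Measure Ω) [IsProbabilityMeasure μ]
    {m : ℕ} (p : Fin m → ℝ) (hp0 : ∀ i, 0 < p i) (hp1 : ∑ i, p i = 1)
    (ξ : ℕ → Ω → Fin m) (hmeas : ∀ n, Measurable (ξ n))
    (hindep : iIndepFun ξ μ)
    (hdist : ∀ n i, μ {ω | ξ n ω = i} = ENNReal.ofReal (p i))
    (k : ℕ) (hk : 1 ≤ k) (hkm : k ≤ m) :
    ∫⁻ ω, (drawsNeeded ξ k ω : ℝ≥0∞) ∂μ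
      = ENNReal.ofReal (∑ s ∈ Finset.range k, nestedSum p s) :=
  expected_draws_for_k_records_general μ p hp0 hp1 ξ hmeas hindep hdist k hkm
end

section
/- Let ξ₁, ξ₂, … be i.i.d. draws from a discrete distribution on S = {1,…,m} with density p (all p_i > 0), let Y_i be the first time the value i appears in the sequence, and let Y = max{Y₁,…,Y_m} be the waiting time until all m values have been observed. Then E[Y] = Σ_i 1/p_i − Σ_{i<j} 1/(p_i+p_j) + Σ_{i<j<k} 1/(p_i+p_j+p_k) − ⋯ + (−1)^{m+1} · 1/(p_1+⋯+p_m). -/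
/-!
`Y > n` exactly when some value is missed by the first `n` draws, and by independence the
values of a set `A` are all missed with probability `(1 - p(A))ⁿ`, where `p(A) = ∑_{i ∈ A} pᵢ`.
Inclusion–exclusion gives `P(Y > n) = ∑_{A ≠ ∅} (-1)^{|A|+1} (1 - p(A))ⁿ`, and summing the tail
probabilities `E[Y] = ∑ₙ P(Y > n)` turns each geometric series into `1 / p(A)`.
-/

open MeasureTheory ProbabilityTheory Finset
open scoped ENNReal

lemma ENat.toENNReal_eq_tsum_ite_lt (a : ℕ∞) :
    (a : ℝ≥0∞) = ∑' n : ℕ, if (n : ℕ∞) < a then 1 else 0 := by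
  induction a using ENat.recTopCoe with
  | top => simp
  | coe k =>
    rw [tsum_eq_sum (s := range k) (fun n hn => by simpa using hn),
      sum_congr rfl fun n hn => if_pos (by simpa using hn)]
    simp

lemma lintegral_toENNReal_eq_tsum_measure_lt {Ω : Type*} [MeasurableSpace Ω] (μ : Measure Ω)
    {X : Ω → ℕ∞} (hX : ∀ n : ℕ, MeasurableSet {ω | (n : ℕ∞) < X ω}) :
    ∫⁻ ω, (X ω : ℝ≥0∞) ∂μ = ∑' n : ℕ, μ {ω | (n : ℕ∞) < X ω} := by
  calc ∫⁻ ω, (X ω : ℝ≥0∞) ∂μ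
      = ∫⁻ ω, ∑' n : ℕ, {ω | (n : ℕ∞) < X ω}.indicator (fun _ => 1) ω ∂μ := by
        simp only [ENat.toENNReal_eq_tsum_ite_lt, Set.indicator_apply, Set.mem_ofPred_eq]
    _ = ∑' n : ℕ, μ {ω | (n : ℕ∞) < X ω} := by
        rw [lintegral_tsum fun n => (measurable_const.indicator (hX n)).aemeasurable]
        exact tsum_congr fun n => lintegral_indicator_one (hX n)

lemma hasSum_pow_sum_compl {α : Type*} [Fintype α] [DecidableEq α] {p : α → ℝ}
    (hp0 : ∀ i, 0 < p i) (hp1 : ∑ i, p i = 1) {A : Finset α} (hA : A.Nonempty) :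
    HasSum (fun n : ℕ => (∑ i ∈ Aᶜ, p i) ^ n) (∑ i ∈ A, p i)⁻¹ := by
  have hcompl : ∑ i ∈ Aᶜ, p i = 1 - ∑ i ∈ A, p i := by
    rw [← hp1, ← sum_compl_add_sum A]; ring
  have hpos : 0 < ∑ i ∈ A, p i := sum_pos (fun i _ => hp0 i) hA
  have hnonneg : 0 ≤ ∑ i ∈ Aᶜ, p i := sum_nonneg fun i _ => (hp0 i).le
  rw [hcompl] at hnonneg ⊢
  simpa using hasSum_geometric_of_lt_one hnonneg (by linarith)

section IID

variable {Ω α : Type*} [MeasurableSpace Ω] {μ : Measure Ω} [MeasurableSpace α]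
  [MeasurableSingletonClass α] {p : α → ℝ}

lemma measure_preimage_finset_eq_ofReal_sum {X : Ω → α} (hp0 : ∀ i, 0 ≤ p i)
    (hX : Measurable X) (hlaw : ∀ i, μ {ω | X ω = i} = ENNReal.ofReal (p i)) (s : Finset α) :
    μ (X ⁻¹' s) = ENNReal.ofReal (∑ i ∈ s, p i) := by
  rw [← sum_measure_preimage_singleton s fun i _ => hX (measurableSet_singleton i),
    ENNReal.ofReal_sum_of_nonneg fun i _ => hp0 i]
  exact sum_congr rfl fun i _ => hlaw i

lemma measureReal_forall_lt_notMem [Fintype α] [DecidableEq α] {ξ : ℕ → Ω → α}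
    (hp0 : ∀ i, 0 ≤ p i) (hmeas : ∀ n, Measurable (ξ n)) (hindep : iIndepFun ξ μ)
    (hlaw : ∀ n i, μ {ω | ξ n ω = i} = ENNReal.ofReal (p i)) (A : Finset α) (n : ℕ) :
    μ.real {ω | ∀ t < n, ξ t ω ∉ A} = (∑ i ∈ Aᶜ, p i) ^ n := by
  have hset : {ω | ∀ t < n, ξ t ω ∉ A} = ⋂ t ∈ range n, ξ t ⁻¹' ↑Aᶜ := by
    ext ω; simp
  have hnonneg : 0 ≤ ∑ i ∈ Aᶜ, p i := sum_nonneg fun i _ => hp0 i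
  rw [measureReal_def, hset, hindep.measure_inter_preimage_eq_mul _ fun t _ => by measurability,
    prod_congr rfl fun t _ => measure_preimage_finset_eq_ofReal_sum hp0 (hmeas t) (hlaw t) Aᶜ,
    prod_const, card_range, ← ENNReal.ofReal_pow hnonneg,
    ENNReal.toReal_ofReal (pow_nonneg hnonneg n)]

end IID

lemma natCast_lt_firstHit_iff {m : ℕ} {Ω : Type*} {ξ : ℕ → Ω → Fin m} {i : Fin m} {ω : Ω}
    {n : ℕ} : (n : ℕ∞) < firstHit ξ i ω ↔ ∀ t < n, ξ t ω ≠ i := by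
  rw [firstHit, ← ENat.add_one_le_iff (ENat.natCast_ne_top n), le_sInf_iff,
    Set.forall_mem_image]
  refine forall_congr' fun t => ?_
  norm_cast
  grind

lemma setOf_natCast_lt_iSup_firstHit {m : ℕ} {Ω : Type*} (ξ : ℕ → Ω → Fin m) (n : ℕ) :
    {ω | (n : ℕ∞) < ⨆ i, firstHit ξ i ω} = ⋃ i, {ω | ∀ t < n, ξ t ω ≠ i} := by
  ext ω
  simp [lt_iSup_iff, natCast_lt_firstHit_iff]

section CouponCollector

variable {Ω : Type*} [MeasurableSpace Ω] {μ : Measure Ω} {m : ℕ} {p : Fin m → ℝ}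
  {ξ : ℕ → Ω → Fin m}

lemma measurableSet_natCast_lt_iSup_firstHit (hmeas : ∀ n, Measurable (ξ n)) (n : ℕ) :
    MeasurableSet {ω | (n : ℕ∞) < ⨆ i, firstHit ξ i ω} := by
  rw [setOf_natCast_lt_iSup_firstHit]
  measurability

lemma measureReal_natCast_lt_iSup_firstHit [IsFiniteMeasure μ] (hp0 : ∀ i, 0 ≤ p i)
    (hmeas : ∀ n, Measurable (ξ n)) (hindep : iIndepFun ξ μ)
    (hlaw : ∀ n i, μ {ω | ξ n ω = i} = ENNReal.ofReal (p i)) (n : ℕ) :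
    μ.real {ω | (n : ℕ∞) < ⨆ i, firstHit ξ i ω}
      = ∑ A ∈ univ.powerset with A.Nonempty, (-1 : ℝ) ^ (#A + 1) * (∑ i ∈ Aᶜ, p i) ^ n := by
  have hunion : ⋃ i, {ω | ∀ t < n, ξ t ω ≠ i} = ⋃ i ∈ univ, {ω | ∀ t < n, ξ t ω ≠ i} := by
    simp
  rw [setOf_natCast_lt_iSup_firstHit, hunion,
    measureReal_biUnion_eq_sum_powerset fun i _ => by measurability]
  refine sum_congr rfl fun A _ => ?_
  have hinter : ⋂ i ∈ A, {ω | ∀ t < n, ξ t ω ≠ i} = {ω | ∀ t < n, ξ t ω ∉ A} := by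
    ext ω; simp only [Set.mem_iInter, Set.mem_ofPred_eq]; grind
  rw [hinter, measureReal_forall_lt_notMem hp0 hmeas hindep hlaw]

end CouponCollector

/-- The expected waiting time Y = max{Y₁,…,Yₘ} until all m values have been
observed equals the inclusion–exclusion sum
Σᵢ 1/pᵢ − Σ_{i<j} 1/(pᵢ+pⱼ) + ⋯ + (−1)^{m+1}/(p₁+⋯+pₘ). -/
theorem expected_time_to_complete_collection
    {Ω : Type*} [MeasurableSpace Ω] (μ : Measure Ω) [IsProbabilityMeasure μ]
    {m : ℕ} (p : Fin m → ℝ) (hp0 : ∀ i, 0 < p i) (hp1 : ∑ i, p i = 1)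
    (ξ : ℕ → Ω → Fin m) (hmeas : ∀ n, Measurable (ξ n))
    (hindep : iIndepFun ξ μ)
    (hdist : ∀ n i, μ {ω | ξ n ω = i} = ENNReal.ofReal (p i)) :
    ∫⁻ ω, ((⨆ i, firstHit ξ i ω : ℕ∞) : ℝ≥0∞) ∂μ
      = ENNReal.ofReal
          (∑ A ∈ Finset.univ.powerset.filter (fun A : Finset (Fin m) => A.Nonempty),
            (-1 : ℝ) ^ (A.card + 1) * (∑ i ∈ A, p i)⁻¹) := by
  have htail := measureReal_natCast_lt_iSup_firstHit (μ := μ) (fun i => (hp0 i).le) hmeas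
    hindep hdist
  have hsum : HasSum (fun n : ℕ => μ.real {ω | (n : ℕ∞) < ⨆ i, firstHit ξ i ω})
      (∑ A ∈ univ.powerset with A.Nonempty, (-1 : ℝ) ^ (#A + 1) * (∑ i ∈ A, p i)⁻¹) := by
    simp only [htail]
    exact hasSum_sum fun A hA =>
      (hasSum_pow_sum_compl hp0 hp1 (mem_filter.mp hA).2).mul_left _
  rw [lintegral_toENNReal_eq_tsum_measure_lt μ (measurableSet_natCast_lt_iSup_firstHit hmeas),
    ← hsum.tsum_eq, ENNReal.ofReal_tsum_of_nonneg (fun n => measureReal_nonneg) hsum.summable]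
  exact tsum_congr fun n => (ofReal_measureReal (measure_ne_top μ _)).symm
end

section
/- Let ξ₁, ξ₂, … be i.i.d. draws from a discrete distribution on S = {1,…,m} with density p (all p_i > 0), and let Z_j denote the type of the j-th distinct value observed, in order of appearance. Then for any 2 ≤ s ≤ m and pairwise distinct indices i₁,…,i_s ∈ S, P[Z_s = i_s | Z₁ = i₁, …, Z_{s−1} = i_{s−1}] = p_{i_s}/(1 − p_{i₁} − ⋯ − p_{i_{s−1}}), and consequently P[Z₁ = i₁, …, Z_s = i_s] = p_{i₁} · (p_{i₂}/p(i₁)) · ⋯ · (p_{i_s}/p(i₁,…,i_{s−1})), where p(i₁,…,i_r) = 1 − p_{i₁} − ⋯ − p_{i_r}. -/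
open MeasureTheory ProbabilityTheory Finset
open scoped ENNReal

/-!
Split the event `{Z₁ = i₁, …, Z_{K+2} = i_{K+2}}` according to the time `n` of the `(K+1)`-th
record and the number `g` of draws between it and the `(K+2)`-th record. The piece indexed by
`(n, g)` is the event `{Z₁ = i₁, …, Z_{K+1} = i_{K+1}, (K+1)-th record at time n}`, intersected
with the cylinder "draws `n+1, …, n+g` lie in `{i₁, …, i_{K+1}}` and draw `n+g+1` is `i_{K+2}`".
The first event only depends on the first `n+1` draws, so it is independent of the cylinder,
whose probability is `q ^ g * p_{i_{K+2}}` with `q = p_{i₁} + ⋯ + p_{i_{K+1}}`. Summing the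
geometric series over `g`, then over `n`, gives the conditional probability
`p_{i_{K+2}} / (1 - q)`, and the product formula follows by induction on the number of records.
-/

namespace RecordProcess

open Function

section Deterministic

variable {α : Type*} [DecidableEq α] {x y : ℕ → α} {n j : ℕ}

def seen (x : ℕ → α) (n : ℕ) : Finset α := (range n).image x

lemma seen_succ (x : ℕ → α) (n : ℕ) : seen x (n + 1) = insert (x n) (seen x n) := by
  rw [seen, range_add_one, image_insert, seen]

lemma seen_one (x : ℕ → α) : seen x 1 = {x 0} := by
  simp [seen]

lemma seen_mono (x : ℕ → α) : Monotone (seen x) :=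
  fun _ _ h => image_subset_image (range_mono h)

lemma self_mem_seen (x : ℕ → α) {t n : ℕ} (h : t < n) : x t ∈ seen x n :=
  mem_image_of_mem x (mem_range.2 h)

lemma seen_congr (h : ∀ t < n, x t = y t) : seen x n = seen y n :=
  image_congr fun t ht => h t (mem_range.1 ht)

lemma seen_eq_of_forall_mem {r : ℕ} (hnr : n ≤ r) (h : ∀ t, n ≤ t → t < r → x t ∈ seen x n) :
    seen x r = seen x n := by
  refine (subset_antisymm (fun a ha => ?_) (seen_mono x hnr))
  obtain ⟨t, ht, rfl⟩ := mem_image.1 ha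
  rcases lt_or_ge t n with htn | htn
  · exact self_mem_seen x htn
  · exact h t htn (mem_range.1 ht)

/-- The time (counting from `0`) of the `j`-th record of `x`; it is `0` when `x` takes fewer
than `j` values. -/
noncomputable def recordTime (x : ℕ → α) (j : ℕ) : ℕ := sInf {n | j ≤ #(seen x (n + 1))}

lemma recordTime_le (h : j ≤ #(seen x (n + 1))) : recordTime x j ≤ n := Nat.sInf_le h

lemma recordTime_one (x : ℕ → α) : recordTime x 1 = 0 :=
  Nat.le_zero.1 (recordTime_le (by simp [seen_one]))

lemma recordTime_congr (hxy : ∀ t ≤ n, x t = y t) (hj : j ≤ #(seen x (n + 1))) :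
    recordTime y j = recordTime x j := by
  have hseen : ∀ t ≤ n, seen y (t + 1) = seen x (t + 1) := fun t ht =>
    (seen_congr fun u hu => hxy u (by omega)).symm
  have hr : recordTime x j ≤ n := recordTime_le hj
  have hmem : j ≤ #(seen y (recordTime x j + 1)) := by
    rw [hseen _ hr]
    exact Nat.sInf_mem (s := {t | j ≤ #(seen x (t + 1))}) ⟨n, hj⟩
  refine le_antisymm (Nat.sInf_le hmem) (le_csInf ⟨_, hmem⟩ fun t ht => ?_)
  by_contra! htr
  exact Nat.notMem_of_lt_sInf htr (show j ≤ #(seen x (t + 1)) by rwa [← hseen t (by omega)])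

lemma recordTime_succ_eq {k g : ℕ} (hk : #(seen x (n + 1)) = k)
    (hold : ∀ t, n < t → t ≤ n + g → x t ∈ seen x (n + 1))
    (hnew : x (n + g + 1) ∉ seen x (n + 1)) :
    recordTime x (k + 1) = n + g + 1 := by
  have hstay : seen x (n + g + 1) = seen x (n + 1) :=
    seen_eq_of_forall_mem (by omega) fun t ht ht' => hold t (by omega) (by omega)
  refine (Nat.sInf_upward_closed_eq_succ_iff (s := {t | k + 1 ≤ #(seen x (t + 1))})
    (fun a b hab ha => le_trans ha (card_le_card (seen_mono x (by omega)))) _).2 ⟨?_, ?_⟩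
  · show k + 1 ≤ #(seen x (n + g + 1 + 1))
    rw [seen_succ, hstay, card_insert_of_notMem hnew, hk]
  · show ¬ k + 1 ≤ #(seen x (n + g + 1))
    rw [hstay, hk]
    omega

lemma lt_recordTime_succ_and_forall_mem {k : ℕ} (hk : #(seen x (n + 1)) = k)
    (hnew : x (recordTime x (k + 1)) ∉ seen x (n + 1)) :
    n < recordTime x (k + 1) ∧
      ∀ t, n < t → t < recordTime x (k + 1) → x t ∈ seen x (n + 1) := by
  have hne : {t | k + 1 ≤ #(seen x (t + 1))}.Nonempty := by
    by_contra hempty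
    rw [Set.not_nonempty_iff_eq_empty] at hempty
    rw [recordTime, hempty, Nat.sInf_empty] at hnew
    exact hnew (self_mem_seen x n.succ_pos)
  have hmem : k + 1 ≤ #(seen x (recordTime x (k + 1) + 1)) := Nat.sInf_mem hne
  have hlt : n < recordTime x (k + 1) := by
    by_contra! hle
    have := card_le_card (seen_mono x (show recordTime x (k + 1) + 1 ≤ n + 1 by omega))
    omega
  refine ⟨hlt, fun t hnt htr => ?_⟩
  have hsmall : #(seen x (t + 1)) ≤ k := by
    have : ¬ k + 1 ≤ #(seen x (t + 1)) :=
      Nat.notMem_of_lt_sInf (s := {t | k + 1 ≤ #(seen x (t + 1))}) htr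
    omega
  have hsub : seen x (n + 1) ⊆ seen x (t + 1) := seen_mono x (by omega)
  rw [eq_of_subset_of_card_le hsub (by omega)]
  exact self_mem_seen x t.lt_succ_self

def HasRecords (x : ℕ → α) {k : ℕ} (a : Fin k → α) : Prop :=
  ∀ j : Fin k, x (recordTime x (j + 1)) = a j

lemma hasRecords_succ_iff {k : ℕ} (a : Fin (k + 1) → α) :
    HasRecords x a ↔
      HasRecords x (Fin.init a) ∧ x (recordTime x (k + 1)) = a (Fin.last k) :=
  Fin.forall_fin_succ'

lemma hasRecords_one_iff (a : Fin 1 → α) : HasRecords x a ↔ x 0 = a 0 := by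
  simp [HasRecords, recordTime_one]

lemma last_notMem_image_init {k : ℕ} {a : Fin (k + 1) → α} (ha : Injective a) :
    a (Fin.last k) ∉ univ.image (Fin.init a) := by
  simp [Fin.init, ha.eq_iff, Fin.castSucc_ne_last]

lemma seen_recordTime_of_hasRecords {K : ℕ} {a : Fin (K + 1) → α} (ha : Injective a)
    (h : HasRecords x a) : seen x (recordTime x (K + 1) + 1) = univ.image a := by
  induction K with
  | zero =>
    rw [recordTime_one, seen_one, (hasRecords_one_iff a).1 h]
    simp
  | succ K ih =>
    obtain ⟨hprev, hlast⟩ := (hasRecords_succ_iff a).1 h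
    have ha₀ : Injective (Fin.init a) := ha.comp (Fin.castSucc_injective _)
    have hseen := ih ha₀ hprev
    obtain ⟨hlt, hold⟩ := lt_recordTime_succ_and_forall_mem
      (by rw [hseen, card_image_of_injective _ ha₀, card_fin])
      (hseen ▸ hlast ▸ last_notMem_image_init ha)
    rw [seen_succ, seen_eq_of_forall_mem hlt fun t ht ht' => hold t (by omega) ht', hseen,
      hlast]
    ext b
    simp [Fin.exists_fin_succ', Fin.init, or_comm, eq_comm]

lemma card_seen_recordTime_of_hasRecords {K : ℕ} {a : Fin (K + 1) → α} (ha : Injective a)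
    (h : HasRecords x a) : #(seen x (recordTime x (K + 1) + 1)) = K + 1 := by
  rw [seen_recordTime_of_hasRecords ha h, card_image_of_injective _ ha, card_fin]

lemma hasRecords_congr {K : ℕ} {a : Fin (K + 1) → α} (ha : Injective a) (h : HasRecords x a)
    (hxy : ∀ t ≤ recordTime x (K + 1), x t = y t) :
    HasRecords y a ∧ recordTime y (K + 1) = recordTime x (K + 1) := by
  have hcard := card_seen_recordTime_of_hasRecords ha h
  have hrt : ∀ j ≤ K + 1, recordTime y j = recordTime x j := fun j hj =>
    recordTime_congr hxy (by omega)
  refine ⟨fun j => ?_, hrt _ le_rfl⟩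
  rw [hrt _ (by omega), ← hxy _ (recordTime_le (by omega)), h j]

section

variable {K : ℕ} {a : Fin (K + 2) → α}

lemma recordTime_succ_eq_of_hasRecords (ha : Injective a)
    (h : HasRecords x (Fin.init a)) {g : ℕ}
    (hold : ∀ t, recordTime x (K + 1) < t → t ≤ recordTime x (K + 1) + g →
      x t ∈ univ.image (Fin.init a))
    (hnew : x (recordTime x (K + 1) + g + 1) = a (Fin.last _)) :
    recordTime x (K + 2) = recordTime x (K + 1) + g + 1 := by
  have ha₀ : Injective (Fin.init a) := ha.comp (Fin.castSucc_injective _)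
  have hseen := seen_recordTime_of_hasRecords ha₀ h
  exact recordTime_succ_eq (card_seen_recordTime_of_hasRecords ha₀ h)
    (hseen ▸ hold) (hseen ▸ hnew ▸ last_notMem_image_init ha)

lemma hasRecords_succ_iff_exists (ha : Injective a) :
    HasRecords x a ↔ HasRecords x (Fin.init a) ∧
      ∃ g, (∀ t, recordTime x (K + 1) < t → t ≤ recordTime x (K + 1) + g →
          x t ∈ univ.image (Fin.init a)) ∧
        x (recordTime x (K + 1) + g + 1) = a (Fin.last _) := by
  have ha₀ : Injective (Fin.init a) := ha.comp (Fin.castSucc_injective _)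
  refine (hasRecords_succ_iff a).trans
    (and_congr_right fun h => ⟨fun hlast => ?_, fun ⟨g, hold, hnew⟩ => ?_⟩)
  · replace hlast : x (recordTime x (K + 2)) = a (Fin.last _) := hlast
    have hseen := seen_recordTime_of_hasRecords ha₀ h
    obtain ⟨hlt, hold⟩ := lt_recordTime_succ_and_forall_mem
      (card_seen_recordTime_of_hasRecords ha₀ h) (hseen ▸ hlast ▸ last_notMem_image_init ha)
    rw [show K + 1 + 1 = K + 2 from rfl] at hlt hold
    refine ⟨recordTime x (K + 2) - recordTime x (K + 1) - 1, fun t ht ht' => ?_, ?_⟩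
    · exact hseen ▸ hold t ht (by omega)
    · rwa [show recordTime x (K + 1) + (recordTime x (K + 2) - recordTime x (K + 1) - 1) + 1
        = recordTime x (K + 2) by omega]
  · show x (recordTime x (K + 2)) = _
    rwa [recordTime_succ_eq_of_hasRecords ha h hold hnew]

end

end Deterministic

section Events

variable {Ω α : Type*} {ξ : ℕ → Ω → α}

def DeterminedByPrefix (ξ : ℕ → Ω → α) (n : ℕ) (E : Set Ω) : Prop :=
  ∀ ω ω', (∀ t ≤ n, ξ t ω = ξ t ω') → ω ∈ E → ω' ∈ E

def waitingCylinder (ξ : ℕ → Ω → α) (A : Finset α) (c : α) (n g : ℕ) : Set Ω :=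
  ⋂ t ∈ Ioc n (n + g + 1), ξ t ⁻¹' (if t ≤ n + g then (A : Set α) else {c})

lemma mem_waitingCylinder {A : Finset α} {c : α} {n g : ℕ} {ω : Ω} :
    ω ∈ waitingCylinder ξ A c n g ↔
      (∀ t, n < t → t ≤ n + g → ξ t ω ∈ A) ∧ ξ (n + g + 1) ω = c := by
  simp only [waitingCylinder, Set.mem_iInter, mem_Ioc, Set.mem_preimage]
  refine ⟨fun h => ⟨fun t ht ht' => ?_, ?_⟩, fun ⟨hA, hc⟩ t ⟨ht, ht'⟩ => ?_⟩
  · simpa [ht'] using h t ⟨ht, by omega⟩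
  · simpa using h (n + g + 1) ⟨by omega, le_rfl⟩
  · split_ifs with htg
    · exact hA t ht htg
    · rwa [show t = n + g + 1 by omega]

variable [DecidableEq α]

def recordsAt (ξ : ℕ → Ω → α) {k : ℕ} (a : Fin k → α) (n : ℕ) : Set Ω :=
  {ω | HasRecords (ξ · ω) a ∧ recordTime (ξ · ω) k = n}

lemma setOf_hasRecords_eq_iUnion {k : ℕ} (a : Fin k → α) :
    {ω | HasRecords (ξ · ω) a} = ⋃ n, recordsAt ξ a n := by
  ext ω
  simp [recordsAt]

lemma pairwise_disjoint_recordsAt {k : ℕ} (a : Fin k → α) :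
    Pairwise (Disjoint on recordsAt ξ a) :=
  fun _ _ hne => Set.disjoint_left.2 fun _ h h' => hne (h.2.symm.trans h'.2)

lemma determinedByPrefix_recordsAt {K : ℕ} {a : Fin (K + 1) → α} (ha : Injective a) (n : ℕ) :
    DeterminedByPrefix ξ n (recordsAt ξ a n) := by
  rintro ω ω' hωω' ⟨h, rfl⟩
  exact hasRecords_congr ha h hωω'

variable {K : ℕ} {a : Fin (K + 2) → α}

lemma setOf_hasRecords_succ_eq_iUnion (ha : Injective a) :
    {ω | HasRecords (ξ · ω) a} = ⋃ n, ⋃ g,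
      recordsAt ξ (Fin.init a) n ∩
        waitingCylinder ξ (univ.image (Fin.init a)) (a (Fin.last _)) n g := by
  ext ω
  simp only [Set.mem_iUnion, Set.mem_inter_iff, recordsAt,
    mem_waitingCylinder, hasRecords_succ_iff_exists ha]
  constructor
  · rintro ⟨h, g, hg⟩
    exact ⟨_, g, ⟨h, rfl⟩, hg⟩
  · rintro ⟨n, g, ⟨h, rfl⟩, hg⟩
    exact ⟨h, g, hg⟩

lemma recordTime_eq_of_mem_inter_waitingCylinder (ha : Injective a) {n g : ℕ} {ω : Ω}
    (hω : ω ∈ recordsAt ξ (Fin.init a) n ∩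
      waitingCylinder ξ (univ.image (Fin.init a)) (a (Fin.last _)) n g) :
    recordTime (ξ · ω) (K + 2) = n + g + 1 := by
  obtain ⟨⟨h, rfl⟩, hC⟩ := hω
  obtain ⟨hold, hnew⟩ := mem_waitingCylinder.1 hC
  exact recordTime_succ_eq_of_hasRecords ha h hold hnew

end Events

section Independence

lemma DeterminedByPrefix.measurableSet_iSup_comap {Ω α : Type*} [mα : MeasurableSpace α]
    [Countable α] [MeasurableSingletonClass α] {ξ : ℕ → Ω → α} {n : ℕ} {E : Set Ω}
    (hE : DeterminedByPrefix ξ n E) :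
    MeasurableSet[⨆ t ∈ Set.Iic n, MeasurableSpace.comap (ξ t) mα] E := by
  let : MeasurableSpace Ω := ⨆ t ∈ Set.Iic n, MeasurableSpace.comap (ξ t) mα
  let X : Ω → Fin (n + 1) → α := fun ω t => ξ t ω
  have hX : Measurable X := measurable_pi_iff.2 fun t => Measurable.of_comap_le <|
    le_iSup₂ (f := fun t (_ : t ∈ Set.Iic n) => MeasurableSpace.comap (ξ t) mα) t.1
      (Nat.lt_succ_iff.1 t.2)
  have hsat : X ⁻¹' (X '' E) = E := by
    refine (Set.subset_preimage_image X E).antisymm' ?_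
    rintro ω' ⟨ω, hω, hXω⟩
    exact hE ω ω' (fun t ht => congrFun hXω ⟨t, by omega⟩) hω
  exact hsat ▸ hX (Set.to_countable _).measurableSet

variable {Ω α : Type*} [MeasurableSpace Ω] [mα : MeasurableSpace α] {μ : Measure Ω}
  {ξ : ℕ → Ω → α}

lemma measure_inter_biInter_preimage [Countable α] [MeasurableSingletonClass α]
    (hmeas : ∀ t, Measurable (ξ t)) (hindep : iIndepFun ξ μ) {n : ℕ} {E : Set Ω}
    (hE : DeterminedByPrefix ξ n E) {I : Finset ℕ} (hI : ∀ t ∈ I, n < t) {S : ℕ → Set α}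
    (hS : ∀ t, MeasurableSet (S t)) :
    μ (E ∩ ⋂ t ∈ I, ξ t ⁻¹' S t) = μ E * ∏ t ∈ I, μ (ξ t ⁻¹' S t) := by
  have hind := indep_iSup_of_disjoint (fun t => (hmeas t).comap_le) hindep.iIndep
    (Set.Iic_disjoint_Ioi (le_refl n))
  have hfuture : MeasurableSet[⨆ t ∈ Set.Ioi n, MeasurableSpace.comap (ξ t) mα]
      (⋂ t ∈ I, ξ t ⁻¹' S t) := by
    refine MeasurableSet.biInter I.countable_toSet fun t ht => ?_
    have hle : MeasurableSpace.comap (ξ t) mα ≤ ⨆ t ∈ Set.Ioi n, MeasurableSpace.comap (ξ t) mα :=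
      le_iSup₂ (f := fun t (_ : t ∈ Set.Ioi n) => MeasurableSpace.comap (ξ t) mα) t (hI t ht)
    exact hle _ ⟨S t, hS t, rfl⟩
  rw [(Indep_iff _ _ μ).1 hind _ _ hE.measurableSet_iSup_comap hfuture,
    hindep.meas_biInter fun t _ => ⟨S t, hS t, rfl⟩]

lemma measure_preimage_finset [MeasurableSingletonClass α] (hmeas : ∀ t, Measurable (ξ t))
    {w : α → ℝ≥0∞} (hlaw : ∀ t i, μ {ω | ξ t ω = i} = w i) (t : ℕ) (A : Finset α) :
    μ (ξ t ⁻¹' A) = ∑ i ∈ A, w i := by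
  rw [← sum_measure_preimage_singleton A fun i _ => hmeas t (measurableSet_singleton i)]
  exact Finset.sum_congr rfl fun i _ => hlaw t i

lemma measurableSet_waitingCylinder [MeasurableSingletonClass α] (hmeas : ∀ t, Measurable (ξ t))
    (A : Finset α) (c : α) (n g : ℕ) : MeasurableSet (waitingCylinder ξ A c n g) :=
  Finset.measurableSet_biInter _ fun t _ => hmeas t <| by
    split_ifs
    exacts [A.measurableSet, measurableSet_singleton c]

lemma measure_inter_waitingCylinder [Countable α] [MeasurableSingletonClass α]
    (hmeas : ∀ t, Measurable (ξ t)) (hindep : iIndepFun ξ μ)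
    {w : α → ℝ≥0∞} (hlaw : ∀ t i, μ {ω | ξ t ω = i} = w i) {n : ℕ} {E : Set Ω}
    (hE : DeterminedByPrefix ξ n E) (A : Finset α) (c : α) (g : ℕ) :
    μ (E ∩ waitingCylinder ξ A c n g) = μ E * ((∑ i ∈ A, w i) ^ g * w c) := by
  rw [waitingCylinder, measure_inter_biInter_preimage hmeas hindep hE
    (fun t ht => (mem_Ioc.1 ht).1)
    fun t => by split_ifs; exacts [A.measurableSet, measurableSet_singleton c],
    prod_Ioc_succ_top (by omega), if_neg (by omega), ← hlaw (n + g + 1) c,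
    prod_congr rfl fun t ht => by rw [if_pos (mem_Ioc.1 ht).2, measure_preimage_finset hmeas hlaw],
    prod_const, Nat.card_Ioc, add_tsub_cancel_left]
  rfl

end Independence

section Recursion

variable {Ω α : Type*} [MeasurableSpace Ω] [DecidableEq α] {μ : Measure Ω} {ξ : ℕ → Ω → α}
  {w : α → ℝ≥0∞}

lemma measure_hasRecords_one (hlaw : ∀ t i, μ {ω | ξ t ω = i} = w i) (a : Fin 1 → α) :
    μ {ω | HasRecords (ξ · ω) a} = w (a 0) := by
  simp only [hasRecords_one_iff]
  exact hlaw 0 (a 0)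

theorem measure_hasRecords_succ [MeasurableSpace α] [MeasurableSingletonClass α] [Countable α]
    (hmeas : ∀ t, Measurable (ξ t)) (hindep : iIndepFun ξ μ)
    (hlaw : ∀ t i, μ {ω | ξ t ω = i} = w i) {K : ℕ}
    {a : Fin (K + 2) → α} (ha : Injective a) :
    μ {ω | HasRecords (ξ · ω) a} =
      w (a (Fin.last _)) * (1 - ∑ j, w (Fin.init a j))⁻¹ *
        μ {ω | HasRecords (ξ · ω) (Fin.init a)} := by
  set a₀ := Fin.init a
  have ha₀ : Injective a₀ := ha.comp (Fin.castSucc_injective _)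
  set A := univ.image a₀
  set c := a (Fin.last _)
  have hdet := determinedByPrefix_recordsAt (ξ := ξ) ha₀
  have hEm : ∀ n, MeasurableSet (recordsAt ξ a₀ n) := fun n =>
    iSup₂_le (fun t _ => (hmeas t).comap_le) _ (hdet n).measurableSet_iSup_comap
  have hpiece : ∀ n g, MeasurableSet (recordsAt ξ a₀ n ∩ waitingCylinder ξ A c n g) :=
    fun n g => (hEm n).inter (measurableSet_waitingCylinder hmeas A c n g)
  have hdisj_g : ∀ n,
      Pairwise (Disjoint on fun g => recordsAt ξ a₀ n ∩ waitingCylinder ξ A c n g) :=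
    fun n g g' hne => Set.disjoint_left.2 fun ω hω hω' => hne <| by
      have := (recordTime_eq_of_mem_inter_waitingCylinder ha hω).symm.trans
        (recordTime_eq_of_mem_inter_waitingCylinder ha hω')
      omega
  have hdisj_n :
      Pairwise (Disjoint on fun n => ⋃ g, recordsAt ξ a₀ n ∩ waitingCylinder ξ A c n g) :=
    fun n n' hne => (pairwise_disjoint_recordsAt a₀ hne).mono
      (Set.iUnion_subset fun _ => Set.inter_subset_left)
      (Set.iUnion_subset fun _ => Set.inter_subset_left)
  calc μ {ω | HasRecords (ξ · ω) a}
      = ∑' n, ∑' g, μ (recordsAt ξ a₀ n ∩ waitingCylinder ξ A c n g) := by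
        rw [setOf_hasRecords_succ_eq_iUnion ha,
          measure_iUnion hdisj_n fun n => MeasurableSet.iUnion (hpiece n)]
        exact tsum_congr fun n => measure_iUnion (hdisj_g n) (hpiece n)
    _ = ∑' n, μ (recordsAt ξ a₀ n) * ((1 - ∑ i ∈ A, w i)⁻¹ * w c) := by
        refine tsum_congr fun n => ?_
        simp_rw [measure_inter_waitingCylinder hmeas hindep hlaw (hdet n)]
        rw [ENNReal.tsum_mul_left, ENNReal.tsum_mul_right, ENNReal.tsum_geometric]
    _ = _ := by
        rw [ENNReal.tsum_mul_right, ← measure_iUnion (pairwise_disjoint_recordsAt a₀) hEm,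
          ← setOf_hasRecords_eq_iUnion, sum_image ha₀.injOn]
        ring

end Recursion

section Real

variable {α : Type*} [Fintype α] {p : α → ℝ}

lemma sum_comp_lt_one (hp0 : ∀ i, 0 < p i) (hp1 : ∑ i, p i = 1) {ι : Type*} {f : ι → α}
    (hf : Injective f) {s : Finset ι} {j : ι} (hj : j ∉ s) : ∑ r ∈ s, p (f r) < 1 := by
  classical
  calc ∑ r ∈ s, p (f r) < ∑ r ∈ insert j s, p (f r) := by
        rw [sum_insert hj]
        linarith [hp0 (f j)]
    _ = ∑ i ∈ (insert j s).image f, p i := (sum_image hf.injOn).symm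
    _ ≤ ∑ i, p i := sum_le_univ_sum_of_nonneg fun i => (hp0 i).le
    _ = 1 := hp1

lemma ofReal_div_one_sub {a b : ℝ} (hb : 0 ≤ b) (hb1 : b < 1) :
    ENNReal.ofReal (a / (1 - b)) = ENNReal.ofReal a * (1 - ENNReal.ofReal b)⁻¹ := by
  rw [ENNReal.ofReal_div_of_pos (by linarith), ENNReal.ofReal_sub _ hb, ENNReal.ofReal_one,
    div_eq_mul_inv]

lemma sum_filter_lt_castSucc {M : Type*} [AddCommMonoid M] {n : ℕ} (g : Fin (n + 1) → M)
    (t : Fin n) :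
    ∑ r ∈ univ.filter (· < t.castSucc), g r = ∑ r ∈ univ.filter (· < t), g r.castSucc := by
  rw [filter_gt_eq_Iio, filter_gt_eq_Iio, ← Fin.map_castSuccEmb_Iio, sum_map]
  rfl

lemma sum_filter_lt_last {M : Type*} [AddCommMonoid M] {n : ℕ} (g : Fin (n + 1) → M) :
    ∑ r ∈ univ.filter (· < Fin.last n), g r = ∑ r : Fin n, g r.castSucc := by
  rw [filter_gt_eq_Iio, Fin.Iio_last_eq_map, sum_map]
  rfl

variable [MeasurableSpace α] [MeasurableSingletonClass α] [DecidableEq α]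
  {Ω : Type*} [MeasurableSpace Ω] {μ : Measure Ω} {ξ : ℕ → Ω → α}

theorem measure_hasRecords_succ_eq_ofReal (hp0 : ∀ i, 0 < p i) (hp1 : ∑ i, p i = 1)
    (hmeas : ∀ t, Measurable (ξ t)) (hindep : iIndepFun ξ μ)
    (hlaw : ∀ t i, μ {ω | ξ t ω = i} = ENNReal.ofReal (p i)) {K : ℕ}
    {a : Fin (K + 2) → α} (ha : Injective a) :
    μ {ω | HasRecords (ξ · ω) a} =
      ENNReal.ofReal (p (a (Fin.last _)) /
          (1 - ∑ r ∈ univ.filter (· < Fin.last _), p (a r))) *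
        μ {ω | HasRecords (ξ · ω) (Fin.init a)} := by
  have hlt : ∑ r ∈ univ.filter (· < Fin.last _), p (a r) < 1 :=
    sum_comp_lt_one hp0 hp1 ha (j := Fin.last _) (by simp)
  rw [measure_hasRecords_succ hmeas hindep hlaw ha,
    ofReal_div_one_sub (sum_nonneg fun r _ => (hp0 _).le) hlt, sum_filter_lt_last,
    ENNReal.ofReal_sum_of_nonneg fun r _ => (hp0 _).le]
  rfl

theorem measure_hasRecords_eq_prod (hp0 : ∀ i, 0 < p i) (hp1 : ∑ i, p i = 1)
    (hmeas : ∀ t, Measurable (ξ t)) (hindep : iIndepFun ξ μ)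
    (hlaw : ∀ t i, μ {ω | ξ t ω = i} = ENNReal.ofReal (p i)) :
    ∀ {K : ℕ} {a : Fin (K + 1) → α}, Injective a →
      μ {ω | HasRecords (ξ · ω) a} =
        ENNReal.ofReal (∏ t, p (a t) / (1 - ∑ r ∈ univ.filter (· < t), p (a r)))
  | 0, a, _ => by simp [measure_hasRecords_one hlaw]
  | K + 1, a, ha => by
    have hlt : ∑ r ∈ univ.filter (· < Fin.last _), p (a r) < 1 :=
      sum_comp_lt_one hp0 hp1 ha (j := Fin.last _) (by simp)
    rw [measure_hasRecords_succ_eq_ofReal hp0 hp1 hmeas hindep hlaw ha,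
      measure_hasRecords_eq_prod hp0 hp1 hmeas hindep hlaw (a := Fin.init a)
        (ha.comp (Fin.castSucc_injective _)),
      ← ENNReal.ofReal_mul (div_nonneg (hp0 _).le (sub_nonneg.2 hlt.le)),
      Fin.prod_univ_castSucc (n := K + 1), mul_comm]
    simp only [sum_filter_lt_castSucc]
    rfl

end Real

lemma numDistinct_eq_card_seen {m : ℕ} {Ω : Type*} (ξ : ℕ → Ω → Fin m) (n : ℕ) (ω : Ω) :
    numDistinct ξ n ω = #(seen (ξ · ω) n) := by
  rw [numDistinct, seen]
  congr 1
  ext b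
  simp [Fin.exists_iff]

lemma recordType_eq {m : ℕ} {Ω : Type*} (ξ : ℕ → Ω → Fin m) (j : ℕ) (ω : Ω) :
    recordType ξ j ω = ξ (recordTime (ξ · ω) j) ω := by
  simp only [recordType, recordTime, numDistinct_eq_card_seen]

lemma iInter_recordType_eq_setOf_hasRecords {m : ℕ} {Ω : Type*} (ξ : ℕ → Ω → Fin m) {k : ℕ}
    (a : Fin k → Fin m) :
    ⋂ t : Fin k, {ω | recordType ξ ((t : ℕ) + 1) ω = a t} = {ω | HasRecords (ξ · ω) a} := by
  ext ω
  simp [HasRecords, recordType_eq]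

end RecordProcess

/-- For 2 ≤ s ≤ m and pairwise distinct i₁,…,i_s (encoded by the embedding
f, with i_j = f (j-1)), P[Z_s = i_s | Z₁ = i₁,…,Z_{s−1} = i_{s−1}]
= p_{i_s} / (1 − p_{i₁} − ⋯ − p_{i_{s−1}}) — stated multiplicatively — and consequently
P[Z₁ = i₁, …, Z_s = i_s] = ∏_{j=1}^s p_{i_j} / p(i₁,…,i_{j−1}). -/
theorem record_types_joint_law
    {Ω : Type*} [MeasurableSpace Ω] (μ : Measure Ω)
    {m : ℕ} (p : Fin m → ℝ) (hp0 : ∀ i, 0 < p i) (hp1 : ∑ i, p i = 1)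
    (ξ : ℕ → Ω → Fin m) (hmeas : ∀ n, Measurable (ξ n))
    (hindep : iIndepFun ξ μ)
    (hdist : ∀ n i, μ {ω | ξ n ω = i} = ENNReal.ofReal (p i))
    (s : ℕ) (hs : 2 ≤ s) (f : Fin s ↪ Fin m) :
    (μ (⋂ t : Fin s, {ω | recordType ξ ((t : ℕ) + 1) ω = f t})
        = ENNReal.ofReal
            (p (f ⟨s - 1, by omega⟩)
              / (1 - ∑ t ∈ Finset.univ.filter (fun t : Fin s => (t : ℕ) < s - 1), p (f t)))
          * μ (⋂ t : Fin s, ⋂ (_ : (t : ℕ) < s - 1),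
                {ω | recordType ξ ((t : ℕ) + 1) ω = f t})) ∧
    μ (⋂ t : Fin s, {ω | recordType ξ ((t : ℕ) + 1) ω = f t})
      = ENNReal.ofReal
          (∏ t : Fin s, p (f t) / (1 - ∑ r ∈ Finset.univ.filter (· < t), p (f r))) := by
  obtain ⟨K, rfl⟩ : ∃ K, s = K + 2 := ⟨s - 2, by omega⟩
  have hlast : (⟨K + 2 - 1, by omega⟩ : Fin (K + 2)) = Fin.last (K + 1) := Fin.ext (by simp)
  have hfilter : univ.filter (fun t : Fin (K + 2) => (t : ℕ) < K + 2 - 1) =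
      univ.filter (· < Fin.last (K + 1)) := by
    ext t
    simp [Fin.lt_def]
  have hprefix : ⋂ t : Fin (K + 2), ⋂ (_ : (t : ℕ) < K + 2 - 1),
      {ω | recordType ξ ((t : ℕ) + 1) ω = f t} =
        ⋂ t : Fin (K + 1), {ω | recordType ξ ((t : ℕ) + 1) ω = f t.castSucc} := by
    ext ω
    simp [Fin.forall_fin_succ']
  rw [hlast, hfilter, hprefix, RecordProcess.iInter_recordType_eq_setOf_hasRecords,
    RecordProcess.iInter_recordType_eq_setOf_hasRecords]
  exact ⟨RecordProcess.measure_hasRecords_succ_eq_ofReal hp0 hp1 hmeas hindep hdist f.injective,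
    RecordProcess.measure_hasRecords_eq_prod hp0 hp1 hmeas hindep hdist f.injective⟩
end

section
/- Let p = (p_1,…,p_m) be a probability vector with all p_i > 0 and Σ p_i = 1. Then the inclusion–exclusion expression Σ_i 1/p_i − Σ_{i<j} 1/(p_i+p_j) + Σ_{i<j<k} 1/(p_i+p_j+p_k) − ⋯ + (−1)^{m+1}/(p_1+⋯+p_m) equals the nested-sum expression 1 + Σ_{i₁} p_{i₁}/p(i₁) + Σ_{i₁≠i₂} p_{i₁}p_{i₂}/(p(i₁)p(i₁,i₂)) + ⋯ + Σ_{i₁,…,i_{m−1} pairwise distinct} p_{i₁}⋯p_{i_{m−1}}/(p(i₁)⋯p(i₁,…,i_{m−1})), where p(i₁,…,i_s) = 1 − p_{i₁} − ⋯ − p_{i_s} (both expressions equal the expected waiting time to observe all m values). -/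
open MeasureTheory ProbabilityTheory Finset
open scoped ENNReal

/-!
Both sides satisfy the first-step recursion of the coupon collector. Let `T` be a set of values
that are still missing, with total mass `S(T) = ∑_{j ∈ T} p_j`. The nested sum over `T` with
`1` replaced by `c = S(T)` satisfies `E(T) = 1 + ∑_{i ∈ T} p_i / S(T \ {i}) · E(T \ {i})`:
split off the first index. For the inclusion–exclusion sum `L(T)`,
`S(T) · L(T) = 1 + ∑_{i ∈ T} p_i · L(T \ {i})`: exchange the two summations, then use
`∑_{i ∈ T \ A} p_i = S(T) - S(A)` and `∑_{∅ ≠ A ⊆ T} (-1)^{|A|+1} = 1`. So `E(T)` and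
`S(T) · L(T)` agree by strong induction on `T`, and `T = univ`, where `S = 1`, gives the theorem.
-/

section InclusionExclusion

variable {ι : Type*}

noncomputable def inclusionExclusionSum (p : ι → ℝ) (T : Finset ι) : ℝ :=
  ∑ A ∈ T.powerset.filter (fun A : Finset ι => A.Nonempty),
    (-1 : ℝ) ^ (A.card + 1) * (∑ i ∈ A, p i)⁻¹

@[simp]
lemma inclusionExclusionSum_empty (p : ι → ℝ) : inclusionExclusionSum p ∅ = 0 := by
  simp [inclusionExclusionSum, filter_singleton]

variable [DecidableEq ι]

lemma sum_powerset_filter_nonempty_neg_one_pow_card_add_one {T : Finset ι}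
    (hT : T.Nonempty) :
    ∑ A ∈ T.powerset.filter (fun A : Finset ι => A.Nonempty), (-1 : ℝ) ^ (A.card + 1) = 1 := by
  have h := congrArg (Int.cast (R := ℝ)) (sum_powerset_neg_one_pow_card_of_nonempty hT)
  rw [← add_sum_erase _ _ (empty_mem_powerset T)] at h
  have hfilter : T.powerset.filter (fun A : Finset ι => A.Nonempty) = T.powerset.erase ∅ := by
    ext A
    simp [nonempty_iff_ne_empty, and_comm]
  simp only [hfilter, pow_succ, ← sum_mul]
  push_cast at h
  simp only [card_empty, pow_zero] at h
  linarith

lemma sum_mul_inclusionExclusionSum {p : ι → ℝ} (hp : ∀ i, 0 < p i) {T : Finset ι}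
    (hT : T.Nonempty) :
    (∑ j ∈ T, p j) * inclusionExclusionSum p T
      = 1 + ∑ i ∈ T, p i * inclusionExclusionSum p (T.erase i) := by
  set nonemptySubsets := T.powerset.filter (fun A : Finset ι => A.Nonempty)
  have hswap : ∑ i ∈ T, p i * inclusionExclusionSum p (T.erase i)
      = ∑ B ∈ nonemptySubsets,
          (∑ i ∈ T \ B, p i) * ((-1 : ℝ) ^ (B.card + 1) * (∑ j ∈ B, p j)⁻¹) := by
    simp only [inclusionExclusionSum, mul_sum, sum_mul]
    refine sum_comm' fun i B => ?_
    simp only [nonemptySubsets, mem_filter, mem_powerset, mem_sdiff, subset_erase]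
    tauto
  have hterm : ∀ B ∈ nonemptySubsets,
      (∑ i ∈ T \ B, p i) * ((-1 : ℝ) ^ (B.card + 1) * (∑ j ∈ B, p j)⁻¹)
        = (∑ j ∈ T, p j) * ((-1 : ℝ) ^ (B.card + 1) * (∑ j ∈ B, p j)⁻¹)
          - (-1 : ℝ) ^ (B.card + 1) := by
    intro B hB
    obtain ⟨hBT, hB⟩ := mem_filter.mp hB
    have hBpos : 0 < ∑ j ∈ B, p j := sum_pos (fun j _ => hp j) hB
    rw [sum_sdiff_eq_sub (mem_powerset.mp hBT)]
    field_simp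
  rw [hswap, sum_congr rfl hterm, sum_sub_distrib,
    sum_powerset_filter_nonempty_neg_one_pow_card_add_one hT, ← mul_sum, inclusionExclusionSum]
  ring

end InclusionExclusion

theorem Fin.sum_filter_le_succ {M : Type*} [AddCommMonoid M] {s : ℕ} (h : Fin (s + 1) → M)
    (t : Fin s) :
    ∑ r ∈ univ.filter (· ≤ t.succ), h r = h 0 + ∑ r ∈ univ.filter (· ≤ t), h r.succ := by
  rw [sum_filter, sum_filter, Fin.sum_univ_succ]
  simp [Fin.succ_le_succ_iff]

section Nested

variable {ι : Type*}

noncomputable def nestedTermAt (p : ι → ℝ) (c : ℝ) (s : ℕ) (f : Fin s → ι) : ℝ :=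
  (∏ t, p (f t)) / ∏ t : Fin s, (c - ∑ r ∈ univ.filter (· ≤ t), p (f r))

lemma nestedTermAt_succ (p : ι → ℝ) (c : ℝ) {s : ℕ} (f : Fin (s + 1) → ι) :
    nestedTermAt p c (s + 1) f
      = p (f 0) / (c - p (f 0)) * nestedTermAt p (c - p (f 0)) s (f ∘ Fin.succ) := by
  have h0 : univ.filter (· ≤ (0 : Fin (s + 1))) = {0} := by ext r; simp
  simp only [nestedTermAt, Fin.prod_univ_succ, Fin.sum_filter_le_succ, h0, sum_singleton,
    Function.comp_apply, sub_add_eq_sub_sub, div_mul_div_comm]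

variable [Fintype ι] [DecidableEq ι]

noncomputable def nestedSumOn (p : ι → ℝ) (c : ℝ) (T : Finset ι) (s : ℕ) : ℝ :=
  ∑ f ∈ univ.filter (fun f : Fin s ↪ ι => ∀ t, f t ∈ T), nestedTermAt p c s f

lemma nestedSumOn_zero (p : ι → ℝ) (c : ℝ) (T : Finset ι) : nestedSumOn p c T 0 = 1 := by
  simp [nestedSumOn, nestedTermAt]

lemma nestedSumOn_succ (p : ι → ℝ) (c : ℝ) (T : Finset ι) (s : ℕ) :
    nestedSumOn p c T (s + 1)
      = ∑ i ∈ T, p i / (c - p i) * nestedSumOn p (c - p i) (T.erase i) s := by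
  simp only [nestedSumOn, nestedTermAt_succ, mul_sum]
  rw [sum_sigma']
  refine sum_bij' (fun f _ => ⟨f 0, (Equiv.embeddingFinSucc s ι f).1⟩)
    (fun x hx => (Equiv.embeddingFinSucc s ι).symm ⟨x.2, x.1, ?_⟩) ?_ ?_ ?_ ?_ ?_
  all_goals simp only [mem_sigma, mem_filter_univ, mem_erase] at *
  · rintro ⟨t, ht⟩
    exact (hx.2 t).1 ht
  · intro f hf
    simpa using ⟨hf 0, fun t => hf t.succ⟩
  · intro x hx
    simpa using fun t => Fin.cases hx.1 (fun t => (hx.2 t).2) t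
  · intro f _
    ext t
    cases t using Fin.cases <;> simp
  · intro x _
    simp
  · intro f _
    simp

-- Stops before `s = T.card`: that term divides by `c - ∑_{j ∈ T} p j`, which is `0` at `c = S(T)`.
noncomputable def nestedTotal (p : ι → ℝ) (c : ℝ) (T : Finset ι) : ℝ :=
  ∑ s ∈ range T.card, nestedSumOn p c T s

lemma nestedTotal_of_nonempty (p : ι → ℝ) (c : ℝ) {T : Finset ι} (hT : T.Nonempty) :
    nestedTotal p c T
      = 1 + ∑ i ∈ T, p i / (c - p i) * nestedTotal p (c - p i) (T.erase i) := by
  obtain ⟨k, hk⟩ := Nat.exists_eq_succ_of_ne_zero hT.card_pos.ne'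
  simp only [nestedTotal, hk, sum_range_succ', nestedSumOn_zero, nestedSumOn_succ]
  rw [sum_comm, add_comm]
  congr 1
  refine sum_congr rfl fun i hi => ?_
  rw [card_erase_of_mem hi, hk, Nat.succ_sub_one, mul_sum]

lemma nestedTotal_eq_sum_mul_inclusionExclusionSum {p : ι → ℝ} (hp : ∀ i, 0 < p i)
    (T : Finset ι) :
    nestedTotal p (∑ j ∈ T, p j) T = (∑ j ∈ T, p j) * inclusionExclusionSum p T := by
  induction T using strongInduction with
  | _ T ih =>
  rcases T.eq_empty_or_nonempty with rfl | hT
  · simp [nestedTotal]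
  rw [nestedTotal_of_nonempty _ _ hT, sum_mul_inclusionExclusionSum hp hT]
  congr 1
  refine sum_congr rfl fun i hi => ?_
  rw [← sum_erase_eq_sub hi, ih _ (erase_ssubset hi)]
  rcases (T.erase i).eq_empty_or_nonempty with he | hne
  · simp [he]
  · rw [← mul_assoc, div_mul_cancel₀ _ (sum_pos (fun j _ => hp j) hne).ne']

end Nested

/-- For a probability vector p, the inclusion–exclusion expression
Σᵢ 1/pᵢ − Σ_{i<j} 1/(pᵢ+pⱼ) + ⋯ + (−1)^{m+1}/(p₁+⋯+pₘ) equals the nested-sum expression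
1 + Σ_{i₁} p_{i₁}/p(i₁) + ⋯ + Σ_{i₁,…,i_{m−1} distinct} p_{i₁}⋯p_{i_{m−1}}/(p(i₁)⋯p(i₁,…,i_{m−1})). -/
theorem inclusion_exclusion_eq_nested_sum
    {m : ℕ} (p : Fin m → ℝ) (hp0 : ∀ i, 0 < p i) (hp1 : ∑ i, p i = 1) :
    ∑ A ∈ Finset.univ.powerset.filter (fun A : Finset (Fin m) => A.Nonempty),
        (-1 : ℝ) ^ (A.card + 1) * (∑ i ∈ A, p i)⁻¹
      = ∑ s ∈ Finset.range m, nestedSum p s := by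
  calc _ = (∑ i, p i) * inclusionExclusionSum p univ := by rw [hp1, one_mul]; rfl
    _ = nestedTotal p (∑ i, p i) univ :=
      (nestedTotal_eq_sum_mul_inclusionExclusionSum hp0 univ).symm
    _ = ∑ s ∈ range m, nestedSum p s := by
      rw [hp1]
      simp [nestedTotal, nestedSumOn, nestedSum, nestedTerm, nestedTermAt]
end
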